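/- For every horizon k ∈ ℕ and every node x ∈ Fin n, the strong recurrence probability of Q satisfies 𝔙_Q(k,x) := sInf { hit F k x : F a policy } = ℓ_Q k x, and the infimum is attained: there exists a policy F* with hit F* k x = ℓ_Q k x. (Proposition 2 together with Remark 4: the minimal probability that a stochastic directed path starting at x visits Q within k steps equals the corresponding optimal state-value function, computed by the backward recursion ℓ_Q.) -/

import Mathlib

/-!
Every policy satisfies `ℓ_Q k ≤ hit F k` by induction on `k`, since the action taken by the
policy at the first step is one of the candidates in the minimum defining `ℓ_Q`. Conversely,
the greedy policy which at time `t` picks a minimiser of the `(k - 1 - t)`-step value achieves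
`ℓ_Q k` exactly, so the infimum is a minimum.
-/

/-- The backward recursion `ℓ_Q` for the strong recurrence probabilities. -/
noncomputable def ellQ (n h : ℕ) (H : Fin n → Fin h → Finset (Fin n))
    (hne : ∀ i w, (H i w).Nonempty) (μ : Fin h → ℝ) (Q : Finset (Fin n)) :
    ℕ → Fin n → ℝ
  | 0, _ => 0
  | k + 1, x => ∑ w, μ w * (H x w).inf' (hne x w)
      (fun y => if y ∈ Q then 1 else ellQ n h H hne μ Q k y)

/-- `hitQ n h μ Q k F x`: probability that the chain driven by the policy `F`
(a sequence of selections of `H`) started at `x` visits `Q` within `k` steps. -/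
noncomputable def hitQ (n h : ℕ) (μ : Fin h → ℝ) (Q : Finset (Fin n)) :
    ℕ → (ℕ → Fin n → Fin h → Fin n) → Fin n → ℝ
  | 0, _, _ => 0
  | k + 1, F, x => ∑ w, μ w *
      (if (F 0) x w ∈ Q then 1
       else hitQ n h μ Q k (fun t => F (t + 1)) ((F 0) x w))

namespace StrongRecurrence

variable {n h : ℕ} {H : Fin n → Fin h → Finset (Fin n)} (hne : ∀ i w, (H i w).Nonempty)
  (μ : Fin h → ℝ) (Q : Finset (Fin n))

theorem ellQ_le_hitQ (hμ0 : ∀ w, 0 ≤ μ w) {F : ℕ → Fin n → Fin h → Fin n}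
    (hF : ∀ t i w, F t i w ∈ H i w) (k : ℕ) (x : Fin n) :
    ellQ n h H hne μ Q k x ≤ hitQ n h μ Q k F x := by
  induction k generalizing F x with
  | zero => simp [ellQ, hitQ]
  | succ k ih =>
    simp only [ellQ, hitQ]
    gcongr with w _
    · exact hμ0 w
    calc (H x w).inf' (hne x w) (fun y => if y ∈ Q then 1 else ellQ n h H hne μ Q k y)
        ≤ if F 0 x w ∈ Q then 1 else ellQ n h H hne μ Q k (F 0 x w) :=
          Finset.inf'_le _ (hF 0 x w)
      _ ≤ _ := by
          split_ifs
          · exact le_rfl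
          · exact ih (fun t => hF (t + 1)) _

noncomputable def greedySelection (m : ℕ) (i : Fin n) (w : Fin h) : Fin n :=
  (Finset.exists_mem_eq_inf' (hne i w)
    (fun y => if y ∈ Q then 1 else ellQ n h H hne μ Q m y)).choose

theorem greedySelection_mem (m : ℕ) (i : Fin n) (w : Fin h) :
    greedySelection hne μ Q m i w ∈ H i w :=
  (Finset.exists_mem_eq_inf' _ _).choose_spec.1

theorem inf'_eq_greedySelection (m : ℕ) (i : Fin n) (w : Fin h) :
    (H i w).inf' (hne i w) (fun y => if y ∈ Q then 1 else ellQ n h H hne μ Q m y) =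
      let y := greedySelection hne μ Q m i w
      if y ∈ Q then 1 else ellQ n h H hne μ Q m y :=
  (Finset.exists_mem_eq_inf' _ _).choose_spec.2

noncomputable def greedyPolicy (k : ℕ) : ℕ → Fin n → Fin h → Fin n :=
  fun t => greedySelection hne μ Q (k - 1 - t)

theorem greedyPolicy_mem (k t : ℕ) (i : Fin n) (w : Fin h) :
    greedyPolicy hne μ Q k t i w ∈ H i w :=
  greedySelection_mem hne μ Q _ i w

theorem greedyPolicy_succ_shift (k : ℕ) :
    (fun t => greedyPolicy hne μ Q (k + 1) (t + 1)) = greedyPolicy hne μ Q k := by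
  funext t
  simp only [greedyPolicy]
  congr 1
  omega

theorem hitQ_greedyPolicy (k : ℕ) (x : Fin n) :
    hitQ n h μ Q k (greedyPolicy hne μ Q k) x = ellQ n h H hne μ Q k x := by
  induction k generalizing x with
  | zero => simp [ellQ, hitQ]
  | succ k ih =>
    simp only [hitQ, ellQ, greedyPolicy_succ_shift, ih]
    refine Finset.sum_congr rfl fun w _ => ?_
    rw [inf'_eq_greedySelection]
    rfl

end StrongRecurrence

open StrongRecurrence in
theorem strong_recurrence_eq_optimal_value_general
    (n h : ℕ)
    (H : Fin n → Fin h → Finset (Fin n))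
    (hne : ∀ i w, (H i w).Nonempty)
    (μ : Fin h → ℝ) (hμ0 : ∀ w, 0 ≤ μ w)
    (Q : Finset (Fin n)) (k : ℕ) (x : Fin n) :
    sInf {r : ℝ | ∃ F : ℕ → Fin n → Fin h → Fin n,
        (∀ t i w, F t i w ∈ H i w) ∧ r = hitQ n h μ Q k F x}
      = ellQ n h H hne μ Q k x ∧
    ∃ F : ℕ → Fin n → Fin h → Fin n, (∀ t i w, F t i w ∈ H i w) ∧
      hitQ n h μ Q k F x = ellQ n h H hne μ Q k x := by
  have hgreedy := hitQ_greedyPolicy hne μ Q k x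
  have hleast : IsLeast {r : ℝ | ∃ F : ℕ → Fin n → Fin h → Fin n,
      (∀ t i w, F t i w ∈ H i w) ∧ r = hitQ n h μ Q k F x} (ellQ n h H hne μ Q k x) := by
    refine ⟨⟨greedyPolicy hne μ Q k, greedyPolicy_mem hne μ Q k, hgreedy.symm⟩, ?_⟩
    rintro _ ⟨F, hF, rfl⟩
    exact ellQ_le_hitQ hne μ Q hμ0 hF k x
  exact ⟨hleast.csInf_eq, greedyPolicy hne μ Q k, greedyPolicy_mem hne μ Q k, hgreedy⟩

/-- **Proposition 2 + Remark 4** (strong recurrence): the minimal probability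
that a stochastic directed path starting at `x` visits `Q` within `k` steps
equals the optimal state-value function `ℓ_Q k x`, and the infimum is
attained by some policy. -/
theorem strong_recurrence_eq_optimal_value
    (n h : ℕ) (hn : 1 ≤ n) (hh : 1 ≤ h)
    (H : Fin n → Fin h → Finset (Fin n))
    (hne : ∀ i w, (H i w).Nonempty)
    (μ : Fin h → ℝ) (hμ0 : ∀ w, 0 ≤ μ w) (hμ1 : ∑ w, μ w = 1)
    (Q : Finset (Fin n)) (k : ℕ) (x : Fin n) :
    sInf {r : ℝ | ∃ F : ℕ → Fin n → Fin h → Fin n,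
        (∀ t i w, F t i w ∈ H i w) ∧ r = hitQ n h μ Q k F x}
      = ellQ n h H hne μ Q k x ∧
    ∃ F : ℕ → Fin n → Fin h → Fin n, (∀ t i w, F t i w ∈ H i w) ∧
      hitQ n h μ Q k F x = ellQ n h H hne μ Q k x :=
  strong_recurrence_eq_optimal_value_general n h H hne μ hμ0 Q k x
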